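/- For each n with 4 ≤ n < ω, the poset P_n (on X ∪ Y ∪ {p,q} as described) is not n-representable: every (n,n)-filter of P_n containing p also contains q, although p ≰ q. -/
import Mathlib


/-- The carrier of the poset `P_n`: elements `p`, `q`, `x i` for `i < n`, and `y s` for
each subset `s` of `{0,...,n-1}` of size `n - 2`. -/
inductive PnElt (n : ℕ) : Type
  | p : PnElt n
  | q : PnElt n
  | x : Fin n → PnElt n
  | y : {s : Finset (Fin n) // s.card = n - 2} → PnElt n

namespace PnElt

variable {n : ℕ}

/-- The order on `P_n`, generated by `q < x i` for all `i`, `x i < p` for all `i`, and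
`x i < y s` iff `i ∈ s`, closed under transitivity (so `q` is below everything). -/
def le : PnElt n → PnElt n → Prop
  | .q, _ => True
  | .x i, .x j => i = j
  | .x _, .p => True
  | .x i, .y s => i ∈ s.1
  | .x _, .q => False
  | .y s, .y t => s = t
  | .y _, _ => False
  | .p, .p => True
  | .p, _ => False

instance : PartialOrder (PnElt n) where
  le := le
  le_refl a := by cases a <;> simp [le]
  le_trans a b c hab hbc := by
    cases a <;> cases b <;> cases c <;> simp_all [le]
  le_antisymm a b hab hba := by
    cases a <;> cases b <;> simp_all [le]

end PnElt

open Cardinal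

/-- `F` is an `(α,β)`-filter of the poset `P`. -/
def ABFilter {P : Type} [PartialOrder P] (α β : Cardinal) (F : Set P) : Prop :=
  (∀ p ∈ F, ∀ q, p ≤ q → q ∈ F) ∧
  (∀ X : Set P, X.Nonempty → X ⊆ F → #X < α → ∀ m, IsGLB X m → m ∈ F) ∧
  (∀ Y : Set P, Y.Nonempty → #Y < β → ∀ j, IsLUB Y j → j ∈ F → ∃ y ∈ Y, y ∈ F)

/-- `h : P → ℘(X)` is an `(α,β)`-representation. -/
def IsRep {P : Type} [PartialOrder P] {X : Type} (α β : Cardinal)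
    (h : P → Set X) : Prop :=
  (∀ p q : P, p ≤ q ↔ h p ⊆ h q) ∧
  (∀ S : Set P, S.Nonempty → #S < α → ∀ m, IsGLB S m → h m = ⋂ x ∈ S, h x) ∧
  (∀ S : Set P, S.Nonempty → #S < β → ∀ j, IsLUB S j → h j = ⋃ x ∈ S, h x)

section Aux

namespace PnElt

variable {n : ℕ}

lemma x_injective : Function.Injective (x : Fin n → PnElt n) := by
  intro a b h; injection h

lemma exists_two_ne (hn : 4 ≤ n) (i0 : Fin n) :
    ∃ j1 j2 : Fin n, j1 ≠ j2 ∧ j1 ≠ i0 ∧ j2 ≠ i0 := by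
  set a : Fin n := ⟨0, by omega⟩
  set b : Fin n := ⟨1, by omega⟩
  set c : Fin n := ⟨2, by omega⟩
  have hab : a ≠ b := by simp [a, b, Fin.ext_iff]
  have hac : a ≠ c := by simp [a, c, Fin.ext_iff]
  have hbc : b ≠ c := by simp [b, c, Fin.ext_iff]
  by_cases h1 : i0 = a
  · exact ⟨b, c, hbc, by simp [h1, hab.symm], by simp [h1, hac.symm]⟩
  · by_cases h2 : i0 = b
    · exact ⟨a, c, hac, by simp [h2, hab], by simp [h2, hbc.symm]⟩
    · exact ⟨a, b, hab, fun h => h1 h.symm, fun h => h2 h.symm⟩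

lemma isLUB_S (hn : 4 ≤ n) (i0 : Fin n) :
    IsLUB (x '' {j | j ≠ i0} : Set (PnElt n)) .p := by
  constructor
  · rintro _ ⟨j, hj, rfl⟩
    exact trivial
  · rintro b hb
    obtain ⟨j1, j2, hj12, hj1, hj2⟩ := exists_two_ne hn i0
    cases b with
    | p => exact le_refl _
    | q => exact absurd (hb ⟨j1, hj1, rfl⟩) id
    | x k =>
        have e1 : j1 = k := hb ⟨j1, hj1, rfl⟩
        have e2 : j2 = k := hb ⟨j2, hj2, rfl⟩
        exact absurd (e1.trans e2.symm) hj12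
    | y s =>
        exfalso
        have hcompl : (s.1ᶜ : Finset (Fin n)).card = 2 := by
          have := Finset.card_compl (s.1)
          have hs := s.2
          simp only [Fintype.card_fin] at this
          omega
        have hcard : 1 ≤ ((s.1ᶜ : Finset (Fin n)).erase i0).card := by
          have := Finset.pred_card_le_card_erase (a := i0) (s := (s.1ᶜ : Finset (Fin n)))
          omega
        obtain ⟨j, hj⟩ := Finset.card_pos.mp hcard
        rw [Finset.mem_erase, Finset.mem_compl] at hj
        exact hj.2 (hb ⟨j, hj.1, rfl⟩)

lemma isGLB_pair {i j : Fin n} (hij : i ≠ j) :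
    IsGLB ({x i, x j} : Set (PnElt n)) .q := by
  constructor
  · rintro a (rfl | rfl) <;> exact trivial
  · rintro b hb
    have h1 : b ≤ x i := hb (Set.mem_insert _ _)
    have h2 : b ≤ x j := hb (Set.mem_insert_of_mem _ rfl)
    cases b with
    | q => exact le_refl _
    | p => exact absurd h1 id
    | x k => exact absurd ((h1 : k = i).symm.trans (h2 : k = j)) hij
    | y s => exact absurd h1 id

lemma mk_S_lt (hn : 4 ≤ n) (i0 : Fin n) :
    #(x '' {j | j ≠ i0} : Set (PnElt n)) < (n : Cardinal) := by
  have heq : ({j | j ≠ i0} : Set (Fin n)) = ↑(Finset.univ.erase i0) := by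
    ext j; simp
  rw [Cardinal.mk_image_eq x_injective, heq]
  rw [Finset.coe_sort_coe, Cardinal.mk_coe_finset,
    Finset.card_erase_of_mem (Finset.mem_univ _), Finset.card_univ, Fintype.card_fin]
  exact_mod_cast (by omega : n - 1 < n)

lemma mk_pair_lt (hn : 4 ≤ n) (a b : PnElt n) :
    #({a, b} : Set (PnElt n)) < (n : Cardinal) := by
  have h1 : #({a, b} : Set (PnElt n)) ≤ #({b} : Set (PnElt n)) + 1 :=
    Cardinal.mk_insert_le
  rw [Cardinal.mk_singleton] at h1
  calc #({a, b} : Set (PnElt n)) ≤ 1 + 1 := h1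
    _ = ((2 : ℕ) : Cardinal) := by norm_num
    _ < (n : Cardinal) := by exact_mod_cast (by omega : 2 < n)

lemma filter_part (hn : 4 ≤ n) (F : Set (PnElt n))
    (hF : ABFilter (n : Cardinal) (n : Cardinal) F) (hp : (.p : PnElt n) ∈ F) :
    (.q : PnElt n) ∈ F := by
  obtain ⟨hup, hmeet, hjoin⟩ := hF
  -- first x
  have h0 : ∃ i : Fin n, (x i : PnElt n) ∈ F := by
    obtain ⟨a, ha, haF⟩ := hjoin (x '' {j | j ≠ (⟨0, by omega⟩ : Fin n)})
      ⟨x ⟨1, by omega⟩, ⟨1, by omega⟩, by simp [Fin.ext_iff], rfl⟩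
      (mk_S_lt hn _) _ (isLUB_S hn _) hp
    obtain ⟨i, _, rfl⟩ := ha
    exact ⟨i, haF⟩
  obtain ⟨i, hi⟩ := h0
  have h1 : ∃ j : Fin n, j ≠ i ∧ (x j : PnElt n) ∈ F := by
    obtain ⟨j1, j2, hj12, hj1, hj2⟩ := exists_two_ne hn i
    obtain ⟨a, ha, haF⟩ := hjoin (x '' {j | j ≠ i})
      ⟨x j1, j1, hj1, rfl⟩ (mk_S_lt hn _) _ (isLUB_S hn _) hp
    obtain ⟨j, hj, rfl⟩ := ha
    exact ⟨j, hj, haF⟩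
  obtain ⟨j, hji, hj⟩ := h1
  exact hmeet {x j, x i} ⟨_, Set.mem_insert _ _⟩
    (by rintro a (rfl | rfl) <;> assumption)
    (mk_pair_lt hn _ _) _ (isGLB_pair hji)

end PnElt

end Aux

/-- For `4 ≤ n < ω`, the poset `P_n` is not `n`-representable: every
`(n,n)`-filter containing `p` also contains `q`, although `p ≰ q`. -/
theorem Pn_not_n_representable (n : ℕ) (hn : 4 ≤ n) :
    (∀ F : Set (PnElt n), ABFilter (n : Cardinal) (n : Cardinal) F →
      PnElt.p ∈ F → PnElt.q ∈ F) ∧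
    ¬ (PnElt.p ≤ (PnElt.q : PnElt n)) ∧
    ¬ (∃ (X : Type) (h : PnElt n → Set X), IsRep (n : Cardinal) (n : Cardinal) h) := by
  refine ⟨fun F hF hp => PnElt.filter_part hn F hF hp, fun h => h, ?_⟩
  rintro ⟨X, h, hle, hmeet, hjoin⟩
  have hnle : ¬ ((.p : PnElt n) ≤ (.q : PnElt n)) := fun h => h
  rw [hle] at hnle
  obtain ⟨t, htp, htq⟩ := Set.not_subset.mp hnle
  set F : Set (PnElt n) := {a | t ∈ h a} with hFdef
  have hF : ABFilter (n : Cardinal) (n : Cardinal) F := by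
    refine ⟨fun a ha b hab => (hle a b).mp hab ha, ?_, ?_⟩
    · intro S hne hsub hcard m hm
      show t ∈ h m
      rw [hmeet S hne hcard m hm]
      exact Set.mem_iInter₂.mpr fun x hx => hsub hx
    · intro Y hne hcard j hj hjF
      have : t ∈ h j := hjF
      rw [hjoin Y hne hcard j hj] at this
      obtain ⟨y, hy, hty⟩ := Set.mem_iUnion₂.mp this
      exact ⟨y, hy, hty⟩
  exact htq (PnElt.filter_part hn F hF htp)
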